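/- arXiv:2103.03951 — 2 statements merged into one kernel-verified Lean document; each statement's English description precedes it below -/
import Mathlib

section
/- Let k be a field of characteristic p > 0, let m', n' be positive integers with gcd(p,m') = 1, and let \alpha' \in k^*. If q_1 and q_2 are two coprime irreducible factors of \alpha' s^{m'} t^{n'} - 1 in k[s,t], then q_1 and q_2 have no common zero in k^2 at which the second coordinate is nonzero. -/
/-!
Specialising the second variable to `t₁ ≠ 0` sends `α' s^{m'} t^{n'} - 1` to the one-variable
polynomial `c X^{m'} - 1` with `c = α' t₁^{n'} ≠ 0`, which is separable because `m' ≠ 0` in `k`.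
Two non-associate irreducible factors `q₁, q₂` are relatively prime in the factorial ring `k[s,t]`,
so `q₁ q₂` divides `α' s^{m'} t^{n'} - 1`; a common zero `(s₁, t₁)` would then make `(X - s₁)²`
divide the separable specialisation.
-/

open MvPolynomial

theorem CharP.natCast_ne_zero_of_coprime (R : Type*) [NonAssocSemiring R] [Nontrivial R]
    {p m : ℕ} [CharP R p] (h : Nat.Coprime p m) : (m : R) ≠ 0 := by
  rw [Ne, CharP.cast_eq_zero_iff R p]
  intro hpm
  exact CharP.char_ne_one R p (Nat.gcd_eq_left hpm ▸ h)

theorem Irreducible.mul_dvd_of_not_associated {α : Type*} [CommMonoid α] [DecompositionMonoid α]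
    {a b c : α} (ha : Irreducible a) (hb : Irreducible b) (hab : ¬Associated a b)
    (hac : a ∣ c) (hbc : b ∣ c) : a * b ∣ c :=
  (ha.isRelPrime_iff_not_dvd.2 fun h ↦ hab (ha.associated_of_dvd hb h)).mul_dvd hac hbc

theorem Polynomial.separable_C_mul_X_pow_sub_one {K : Type*} [Field K] {m : ℕ}
    (hm : (m : K) ≠ 0) {c : K} (hc : c ≠ 0) :
    (Polynomial.C c * Polynomial.X ^ m - 1).Separable := by
  have hfactor : Polynomial.C c * Polynomial.X ^ m - 1 =
      Polynomial.C c * (Polynomial.X ^ m - Polynomial.C c⁻¹) := by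
    rw [mul_sub, ← Polynomial.C_mul, mul_inv_cancel₀ hc, Polynomial.C_1]
  rw [hfactor]
  exact (Polynomial.separable_X_pow_sub_C _ hm (inv_ne_zero hc)).unit_mul
    (Polynomial.isUnit_C.2 hc.isUnit)

namespace MvPolynomial

variable {k : Type*} [CommRing k]

noncomputable def specializeSnd (t : k) : MvPolynomial (Fin 2) k →+* Polynomial k :=
  (Polynomial.mapRingHom (eval ![t])).comp (finSuccEquiv k 1).toRingHom

theorem eval_specializeSnd (q : MvPolynomial (Fin 2) k) (s t : k) :
    (specializeSnd t q).eval s = eval ![s, t] q :=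
  (eval_eq_eval_mv_eval' ![t] s q).symm

theorem specializeSnd_C_mul_X_pow_mul_X_pow_sub_one (α t : k) (m n : ℕ) :
    specializeSnd t (C α * X 0 ^ m * X 1 ^ n - 1) =
      Polynomial.C (α * t ^ n) * Polynomial.X ^ m - 1 := by
  change Polynomial.map (eval ![t])
    (finSuccEquiv k 1 (C α * X 0 ^ m * X (Fin.succ 0) ^ n - 1)) = _
  simp only [map_sub, map_mul, map_pow, map_one, finSuccEquiv_X_zero, finSuccEquiv_X_succ,
    ← MvPolynomial.algebraMap_eq, AlgEquiv.commutes]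
  simp only [Polynomial.algebraMap_apply, algebraMap_eq, Polynomial.map_sub, Polynomial.map_mul,
    Polynomial.map_C, Polynomial.map_pow, Polynomial.map_X, Polynomial.map_one, eval_C, eval_X,
    Matrix.cons_val_fin_one]
  ring

end MvPolynomial

theorem coprime_factors_no_common_zero_general {k : Type*} [Field k] (p : ℕ)
    [CharP k p] (m' n' : ℕ) (hgcd : Nat.gcd p m' = 1)
    (α' : k) (hα' : α' ≠ 0)
    (q₁ q₂ : MvPolynomial (Fin 2) k)
    (hq₁ : Irreducible q₁) (hq₂ : Irreducible q₂)
    (hd₁ : q₁ ∣ (C α' * X 0 ^ m' * X 1 ^ n' - 1 : MvPolynomial (Fin 2) k))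
    (hd₂ : q₂ ∣ (C α' * X 0 ^ m' * X 1 ^ n' - 1 : MvPolynomial (Fin 2) k))
    (hne : ¬ Associated q₁ q₂) :
    ∀ s₁ t₁ : k, t₁ ≠ 0 → ¬ (eval ![s₁, t₁] q₁ = 0 ∧ eval ![s₁, t₁] q₂ = 0) := by
  rintro s₁ t₁ ht₁ ⟨h₁, h₂⟩
  set f : MvPolynomial (Fin 2) k := C α' * X 0 ^ m' * X 1 ^ n' - 1
  have hsep : (specializeSnd t₁ f).Separable := by
    rw [specializeSnd_C_mul_X_pow_mul_X_pow_sub_one]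
    exact Polynomial.separable_C_mul_X_pow_sub_one (CharP.natCast_ne_zero_of_coprime k hgcd)
      (mul_ne_zero hα' (pow_ne_zero _ ht₁))
  have hroot {q : MvPolynomial (Fin 2) k} (hq : eval ![s₁, t₁] q = 0) :
      Polynomial.X - Polynomial.C s₁ ∣ specializeSnd t₁ q :=
    Polynomial.dvd_iff_isRoot.2 (by rwa [Polynomial.IsRoot, eval_specializeSnd])
  have hsq : (Polynomial.X - Polynomial.C s₁) * (Polynomial.X - Polynomial.C s₁) ∣
      specializeSnd t₁ f := by
    calc _ ∣ specializeSnd t₁ q₁ * specializeSnd t₁ q₂ := mul_dvd_mul (hroot h₁) (hroot h₂)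
      _ = specializeSnd t₁ (q₁ * q₂) := (map_mul _ _ _).symm
      _ ∣ specializeSnd t₁ f := map_dvd _ (hq₁.mul_dvd_of_not_associated hq₂ hne hd₁ hd₂)
  exact Polynomial.not_isUnit_X_sub_C s₁ (Polynomial.isUnit_of_self_mul_dvd_separable hsep hsq)

/-- in characteristic `p > 0` with `gcd(p, m') = 1`, `m', n' > 0`,
two non-associate irreducible factors of `α' s^{m'} t^{n'} - 1` have no common zero
`(s₁, t₁)` with `t₁ ≠ 0`. -/
theorem coprime_factors_no_common_zero {k : Type*} [Field k] (p : ℕ) [Fact p.Prime]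
    [CharP k p] (m' n' : ℕ) (hm' : 0 < m') (hn' : 0 < n') (hgcd : Nat.gcd p m' = 1)
    (α' : k) (hα' : α' ≠ 0)
    (q₁ q₂ : MvPolynomial (Fin 2) k)
    (hq₁ : Irreducible q₁) (hq₂ : Irreducible q₂)
    (hd₁ : q₁ ∣ (C α' * X 0 ^ m' * X 1 ^ n' - 1 : MvPolynomial (Fin 2) k))
    (hd₂ : q₂ ∣ (C α' * X 0 ^ m' * X 1 ^ n' - 1 : MvPolynomial (Fin 2) k))
    (hne : ¬ Associated q₁ q₂) :
    ∀ s₁ t₁ : k, t₁ ≠ 0 → ¬ (eval ![s₁, t₁] q₁ = 0 ∧ eval ![s₁, t₁] q₂ = 0) :=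
  coprime_factors_no_common_zero_general p m' n' hgcd α' hα' q₁ q₂ hq₁ hq₂ hd₁ hd₂ hne
end

section
/- Let F be a field and n = 2k+1 \geq 3 odd. Consider the affine variety W \subset F^{n+2} \times F^* of tuples (a, b, c_1, \ldots, c_n, t) satisfying: t^{-1} + c_n(1 + ab) = 0; 1 + (1+ab)(-c_1) = 0 (interpreting products as commutative, with the extra term (-b)(1 + c_2 c_3) added to this equation when n = 3); 1 + c_{j-1} c_j = 0 for 2 \leq j \leq k+1; and 1 + c_j c_{j-1} = 0 for k+2 \leq j \leq n. Then the projection (a,b,c_1,\ldots,c_n,t) \mapsto (a, b, c_1) is a bijection from W onto V' = \{(a,b,c) \in F^3 : (ab+1)c = 1\}, with inverse given by c_j = c for j odd, c_j = -(ab+1) for j even, and t = -1. -/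
/-!
The equations `∂e_j = 0` for `2 ≤ j ≤ n` say exactly that consecutive entries of `c` multiply to
`-1`, which forces `c` to be 2-periodic, `c_j = c_{j+2}`. The equation `∂e₁ = 0` reads
`(1 + ab) c₁ = 1` (for `n = 3` its extra term is a multiple of `1 + c₂ c₃ = 0`), so
`c₂ = -1 / c₁ = -(1 + ab)`. Finally `n` is odd, so `c_n = c₁` and `∂e₀ = 0` gives `t⁻¹ = -1`.
-/


/-- The (abelianized) augmentation variety `W` of the Legendrian twist knot `Λₙ`,
`n = 2K+1 ≥ 3`: tuples `(a, b, c₁, …, cₙ, t)` (here `c i` stands for `c_{i+1}`)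
satisfying the abelianized differentials of the degree-1 Reeb chords set to zero. -/
def twistW (F : Type*) [Field F] (K n : ℕ) (hn : n = 2 * K + 1) (h3 : 3 ≤ n) :
    Set (F × F × (Fin n → F) × Fˣ) :=
  {w | -- ∂e₀ = 0 :  t⁻¹ + cₙ (1 + a b) = 0
       (((w.2.2.2⁻¹ : Fˣ) : F) + w.2.2.1 ⟨n - 1, by omega⟩ * (1 + w.1 * w.2.1) = 0) ∧
       -- ∂e₁ = 0 :  1 + (1 + a b)(-c₁) (+ (-b)(1 + c₂ c₃) when n = 3) = 0
       (1 + (1 + w.1 * w.2.1) * (-(w.2.2.1 ⟨0, by omega⟩)) +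
          (if n = 3 then
            (-(w.2.1)) * (1 + w.2.2.1 ⟨1, by omega⟩ * w.2.2.1 ⟨2, by omega⟩)
           else 0) = 0) ∧
       -- ∂e_j = 0 for 2 ≤ j ≤ K+1 :  1 + c_{j-1} c_j = 0
       (∀ (j : ℕ) (_hj0 : 2 ≤ j) (_hj1 : j ≤ K + 1) (_hj2 : j ≤ n), 1 + w.2.2.1 ⟨j - 2, by omega⟩ * w.2.2.1 ⟨j - 1, by omega⟩ = 0) ∧
       -- ∂e_j = 0 for K+2 ≤ j ≤ n :  1 + c_j c_{j-1} = 0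
       (∀ (j : ℕ) (_hj1 : K + 2 ≤ j) (_hj2 : j ≤ n),
          1 + w.2.2.1 ⟨j - 1, by omega⟩ * w.2.2.1 ⟨j - 2, by omega⟩ = 0)}

/-- The hypersurface `V' = {(a,b,c) : (ab+1)c = 1}`. -/
def twistV' (F : Type*) [Field F] : Set (F × F × F) :=
  {v | (v.1 * v.2.1 + 1) * v.2.2 = 1}

/-- The projection `(a, b, c₁, …, cₙ, t) ↦ (a, b, c₁)`. -/
def twistProj (F : Type*) [Field F] (K n : ℕ) (hn : n = 2 * K + 1) (h3 : 3 ≤ n) :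
    F × F × (Fin n → F) × Fˣ → F × F × F :=
  fun w => (w.1, w.2.1, w.2.2.1 ⟨0, by omega⟩)

/-- The inverse map: `c_j = c` for `j` odd (i.e. `c i = c` for `i` even, where
`c i` stands for `c_{i+1}`), `c_j = -(ab+1)` for `j` even, and `t = -1`. -/
def twistInv (F : Type*) [Field F] (K n : ℕ) (hn : n = 2 * K + 1) (h3 : 3 ≤ n) :
    F × F × F → F × F × (Fin n → F) × Fˣ :=
  fun v => (v.1, v.2.1,
    fun i => if (i : ℕ) % 2 = 0 then v.2.2 else -(v.1 * v.2.1 + 1),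
    (-1 : Fˣ))

theorem Fin.apply_eq_apply_mod_two_of_mul_succ_eq_neg_one {R : Type*} [CommRing R] {n : ℕ}
    {c : Fin n → R} (hc : ∀ m (hm : m + 1 < n), c ⟨m, by omega⟩ * c ⟨m + 1, hm⟩ = -1)
    (i : Fin n) : c i = c ⟨i % 2, by omega⟩ := by
  obtain ⟨m, hm⟩ := i
  induction m using Nat.strong_induction_on with
  | _ m ih =>
    match m, hm, ih with
    | 0, _, _ => rfl
    | 1, _, _ => rfl
    | m + 2, hm, ih =>
      have h_period : c ⟨m + 2, hm⟩ = c ⟨m, by omega⟩ := by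
        linear_combination c ⟨m + 2, hm⟩ * hc m (by omega) - c ⟨m, by omega⟩ * hc (m + 1) hm
      rw [h_period, ih m (by omega) (by omega)]
      simp only [Nat.add_mod_right]

namespace TwistKnot

variable {F : Type*} [Field F] {K n : ℕ} {hn : n = 2 * K + 1} {h3 : 3 ≤ n}

theorem twistInv_mapsTo : Set.MapsTo (twistInv F K n hn h3) (twistV' F) (twistW F K n hn h3) := by
  rintro ⟨a, b, c⟩ (hv : (a * b + 1) * c = 1)
  have h_alt : ∀ i j : Fin n, (j : ℕ) = i + 1 →
      1 + (if (i : ℕ) % 2 = 0 then c else -(a * b + 1)) *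
        (if (j : ℕ) % 2 = 0 then c else -(a * b + 1)) = 0 := by
    rintro i j hij
    rcases Nat.mod_two_eq_zero_or_one i with hi | hi
    · rw [if_pos hi, if_neg (by omega)]; linear_combination -hv
    · rw [if_neg (by omega), if_pos (by omega)]; linear_combination -hv
  refine ⟨?_, ?_, fun j _ _ _ => h_alt _ _ (by dsimp only; omega), fun j _ _ => ?_⟩
  · simp only [twistInv, if_pos (show (n - 1) % 2 = 0 by omega), inv_neg, inv_one, Units.val_neg,
      Units.val_one]
    linear_combination hv
  · by_cases h : n = 3
    · simp only [twistInv, h, Nat.mod_self, Nat.mod_succ, one_ne_zero, ↓reduceIte]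
      linear_combination (b - 1) * hv
    · simp only [twistInv, h, Nat.zero_mod, ↓reduceIte]
      linear_combination -hv
  · rw [mul_comm]; exact h_alt _ _ (by dsimp only; omega)

variable {a b : F} {c : Fin n → F} {t : Fˣ}

theorem mul_succ_eq_neg_one_of_mem_twistW (hw : (a, b, c, t) ∈ twistW F K n hn h3) (m : ℕ)
    (hm : m + 1 < n) : c ⟨m, by omega⟩ * c ⟨m + 1, hm⟩ = -1 := by
  obtain ⟨-, -, h_low, h_high⟩ := hw
  rcases le_or_gt (m + 2) (K + 1) with h | h
  · exact eq_neg_of_add_eq_zero_right (h_low (m + 2) (by omega) h (by omega))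
  · rw [mul_comm]
    exact eq_neg_of_add_eq_zero_right (h_high (m + 2) (by omega) (by omega))

theorem one_add_mul_mul_eq_one_of_mem_twistW (hw : (a, b, c, t) ∈ twistW F K n hn h3) :
    (1 + a * b) * c ⟨0, by omega⟩ = 1 := by
  have h_e1 := hw.2.1
  split_ifs at h_e1 with h
  · subst h
    linear_combination -h_e1 - b * mul_succ_eq_neg_one_of_mem_twistW hw 1 (by omega)
  · linear_combination -h_e1

theorem twistProj_mapsTo : Set.MapsTo (twistProj F K n hn h3) (twistW F K n hn h3) (twistV' F) := by
  rintro ⟨a, b, c, t⟩ hw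
  show (a * b + 1) * c ⟨0, by omega⟩ = 1
  linear_combination one_add_mul_mul_eq_one_of_mem_twistW hw

theorem apply_eq_of_mem_twistW (hw : (a, b, c, t) ∈ twistW F K n hn h3) (i : Fin n) :
    c i = if (i : ℕ) % 2 = 0 then c ⟨0, by omega⟩ else -(a * b + 1) := by
  rw [Fin.apply_eq_apply_mod_two_of_mul_succ_eq_neg_one (mul_succ_eq_neg_one_of_mem_twistW hw) i]
  split_ifs with hi
  · simp only [hi]
  · simp only [Nat.mod_two_ne_zero.mp hi]
    linear_combination (-c ⟨1, by omega⟩) * one_add_mul_mul_eq_one_of_mem_twistW hw +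
      (1 + a * b) * mul_succ_eq_neg_one_of_mem_twistW hw 0 (by omega)

theorem eq_neg_one_of_mem_twistW (hw : (a, b, c, t) ∈ twistW F K n hn h3) : t = -1 := by
  have h_e0 : ((t⁻¹ : Fˣ) : F) + c ⟨n - 1, by omega⟩ * (1 + a * b) = 0 := hw.1
  rw [apply_eq_of_mem_twistW hw, if_pos (by dsimp only; omega)] at h_e0
  have h_inv : t⁻¹ = -1 := Units.ext <| by
    rw [Units.val_neg, Units.val_one]
    linear_combination h_e0 - one_add_mul_mul_eq_one_of_mem_twistW hw
  simpa using congrArg Inv.inv h_inv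

theorem twistInv_twistProj :
    Set.LeftInvOn (twistInv F K n hn h3) (twistProj F K n hn h3) (twistW F K n hn h3) := by
  rintro ⟨a, b, c, t⟩ hw
  simp only [twistInv, twistProj, eq_neg_one_of_mem_twistW hw, Prod.mk.injEq, true_and, and_true]
  exact funext fun i => (apply_eq_of_mem_twistW hw i).symm

end TwistKnot

open TwistKnot in
/-- the projection `(a,b,c₁,…,cₙ,t) ↦ (a,b,c₁)` is a bijection from
the augmentation variety `W` of `Λₙ` onto `V' = {(a,b,c) : (ab+1)c = 1}`, with
inverse given by `c_j = c` for `j` odd, `c_j = -(ab+1)` for `j` even, and `t = -1`. -/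
theorem twist_knot_augmentation_variety {F : Type*} [Field F] (K n : ℕ)
    (hn : n = 2 * K + 1) (h3 : 3 ≤ n) :
    Set.BijOn (twistProj F K n hn h3) (twistW F K n hn h3) (twistV' F) ∧
    (∀ v ∈ twistV' F, twistInv F K n hn h3 v ∈ twistW F K n hn h3 ∧
        twistProj F K n hn h3 (twistInv F K n hn h3 v) = v) ∧
    (∀ w ∈ twistW F K n hn h3, twistInv F K n hn h3 (twistProj F K n hn h3 w) = w) := by
  have h_right : Set.LeftInvOn (twistProj F K n hn h3) (twistInv F K n hn h3) (twistV' F) :=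
    fun _ _ => rfl
  exact ⟨Set.InvOn.bijOn ⟨twistInv_twistProj, h_right⟩ twistProj_mapsTo twistInv_mapsTo,
    fun v hv => ⟨twistInv_mapsTo hv, h_right hv⟩, twistInv_twistProj⟩
end
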